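/- arXiv:1803.04448 — 2 statements merged into one kernel-verified Lean document; each statement's English description precedes it below -/
import Mathlib

section
/- Let C and C' be curves over a field k with a closed immersion i : C' → C. Then for every closed point x of C', one has jac(C', x) ≤ jac(C, x). -/
/-! Localizing the closed immersion at `x` gives a surjection `O_{C,x} ↠ O_{C',x}`. It induces a
surjection on Kähler differentials, so it maps `Fitt¹(Ω¹_C)` into `Fitt¹(Ω¹_{C'})`, and hence
`O_{C',x} / Fitt¹(Ω¹_{C'})` is a quotient of `O_{C,x} / Fitt¹(Ω¹_C)`, of no larger `k`-dimension. -/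

universe u

open scoped TensorProduct

/-- The first Fitting ideal `Fitt¹(M)` of an `R`-module `M`: for any finite presentation
`R^n → M`, it is the ideal generated by the `(n-1) × (n-1)` minors of a relation matrix
(all presentations yield the same ideal, so we take the supremum over all of them). -/
noncomputable def fittingIdealOne (R : Type*) [CommRing R] (M : Type*) [AddCommGroup M]
    [Module R M] : Ideal R :=
  ⨆ (n : ℕ), ⨆ (π : (Fin n → R) →ₗ[R] M), ⨆ (_ : Function.Surjective π),
    Ideal.span { x : R | ∃ (v : Fin (n - 1) → Fin n → R) (c : Fin (n - 1) → Fin n),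
      (∀ i, π (v i) = 0) ∧ x = Matrix.det (Matrix.of fun i j => v i (c j)) }

/-- The Jacobian number of a `k`-algebra `A` : `dim_k (A / Fitt¹(Ω¹_{A/k}))`. -/
noncomputable def jacNumber (k A : Type*) [Field k] [CommRing A] [Algebra k A] : Cardinal :=
  Module.rank k (A ⧸ fittingIdealOne A (Ω[A⁄k]))

/-- The Jacobian number of the curve `Spec R` over `k` at a point `𝔪`, i.e. the
`k`-dimension of the stalk of `O_C / Fitt¹(Ω¹_{C/k})` at `𝔪`. -/
noncomputable def jacAt (k : Type*) {R : Type*} [Field k] [CommRing R] [Algebra k R]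
    (𝔪 : Ideal R) [𝔪.IsPrime] : Cardinal :=
  jacNumber k (Localization.AtPrime 𝔪)

theorem det_mem_fittingIdealOne {R M : Type*} [CommRing R] [AddCommGroup M] [Module R M]
    {n : ℕ} (π : (Fin n → R) →ₗ[R] M) (hπ : Function.Surjective π)
    (v : Fin (n - 1) → Fin n → R) (hv : ∀ i, π (v i) = 0) (c : Fin (n - 1) → Fin n) :
    Matrix.det (Matrix.of fun i j => v i (c j)) ∈ fittingIdealOne R M :=
  Submodule.mem_iSup_of_mem n <| Submodule.mem_iSup_of_mem π <| Submodule.mem_iSup_of_mem hπ <|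
    Ideal.subset_span ⟨v, c, hv, rfl⟩

/-- A presentation `π : A^n ↠ M` induces the presentation `A'^n ↠ M'` sending the `i`-th basis
vector to `φ (π eᵢ)`; its relations contain the images of the relations of `π`, so the minors of
the latter are minors of the former. -/
theorem fittingIdealOne_le_comap {A A' M M' : Type*} [CommRing A] [CommRing A'] [Algebra A A']
    [AddCommGroup M] [Module A M] [AddCommGroup M'] [Module A M'] [Module A' M']
    [IsScalarTower A A' M'] (φ : M →ₗ[A] M') (hφ : Function.Surjective φ) :
    fittingIdealOne A M ≤ (fittingIdealOne A' M').comap (algebraMap A A') := by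
  refine iSup_le fun n => iSup_le fun π => iSup_le fun hπ => ?_
  let π' := Fintype.linearCombination A' fun i => φ (π (Pi.single i 1))
  have hπ'_comp : ∀ w : Fin n → A, π' (algebraMap A A' ∘ w) = φ (π w) := fun w => by
    conv_rhs => rw [← Finset.univ_sum_single w]
    simp only [π', Fintype.linearCombination_apply, Function.comp_apply, algebraMap_smul,
      ← map_smul, ← map_sum, ← Pi.single_smul', smul_eq_mul, mul_one]
  have hπ' : Function.Surjective π' := fun m => by
    obtain ⟨w, rfl⟩ := (hφ.comp hπ) m
    exact ⟨_, hπ'_comp w⟩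
  rw [Ideal.span_le]
  rintro _ ⟨v, c, hv, rfl⟩
  rw [SetLike.mem_coe, Ideal.mem_comap, RingHom.map_det]
  exact det_mem_fittingIdealOne π' hπ' (fun i => algebraMap A A' ∘ v i)
    (fun i => by rw [hπ'_comp, hv, map_zero]) c

theorem jacNumber_le_of_surjective {k : Type*} {A A' : Type u} [Field k] [CommRing A]
    [CommRing A'] [Algebra k A] [Algebra k A'] (g : A →ₐ[k] A') (hg : Function.Surjective g) :
    jacNumber k A' ≤ jacNumber k A := by
  let _ : Algebra A A' := g.toAlgebra
  have : IsScalarTower k A A' := .of_algebraMap_eq fun x => (g.commutes x).symm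
  have hle : fittingIdealOne A (Ω[A⁄k]) ≤ (fittingIdealOne A' (Ω[A'⁄k])).comap g :=
    fittingIdealOne_le_comap (KaehlerDifferential.map k k A A')
      (KaehlerDifferential.map_surjective_of_surjective k k A A' hg)
  exact LinearMap.rank_le_of_surjective (Ideal.quotientMapₐ _ g hle).toLinearMap
    (Ideal.quotientMap_surjective (H := hle) hg)

theorem stmt_3_general (k R R' : Type u) [Field k] [CommRing R] [CommRing R']
    [Algebra k R] [Algebra k R']
    (f : R →ₐ[k] R') (hf : Function.Surjective f)
    (𝔪' : Ideal R') (h𝔪' : 𝔪'.IsMaximal) :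
    (letI := h𝔪'.isPrime; jacAt k 𝔪') ≤
      (letI : (𝔪'.comap (f : R →+* R')).IsPrime := h𝔪'.isPrime.comap _
       jacAt k (𝔪'.comap (f : R →+* R'))) := by
  have := h𝔪'.isPrime
  exact jacNumber_le_of_surjective (Localization.localAlgHom _ 𝔪' f rfl)
    (RingHom.surjective_localRingHom_of_surjective (f : R →+* R') hf 𝔪')

/-- Let `C = Spec R` and `C' = Spec R'` be curves over a field `k` together with
a closed immersion `i : C' ↪ C` (i.e. a surjective `k`-algebra homomorphism `f : R → R'`).
For every closed point `x` of `C'` (a maximal ideal `𝔪'` of `R'`, lying over the point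
`𝔪 = f⁻¹(𝔪')` of `C`), one has `jac(C', x) ≤ jac(C, x)`. -/
theorem stmt_3 (k R R' : Type u) [Field k] [CommRing R] [CommRing R']
    [Algebra k R] [Algebra k R'] [Algebra.FiniteType k R] [Algebra.FiniteType k R']
    (hdimR : ringKrullDim R = 1) (hdimR' : ringKrullDim R' = 1)
    (f : R →ₐ[k] R') (hf : Function.Surjective f)
    (𝔪' : Ideal R') (h𝔪' : 𝔪'.IsMaximal) :
    (letI := h𝔪'.isPrime; jacAt k 𝔪') ≤
      (letI : (𝔪'.comap (f : R →+* R')).IsPrime := h𝔪'.isPrime.comap _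
       jacAt k (𝔪'.comap (f : R →+* R'))) :=
  stmt_3_general k R R' f hf 𝔪' h𝔪'
end

section
/- Let k be a field of characteristic 2, and let f ∈ k[[S,T]] be a nonzero power series with f(0,0) = 0 defining a curve singularity. Then the Jacobian number dim_k k[[S,T]]/(f_S, f_T, f) is never equal to 2: it is 0 if the linear part of f is nonzero; at least 3 if the linear part vanishes and the coefficient of ST in f is 0; and equal to 1 (f defines a node) if the linear part vanishes and the coefficient of ST is nonzero. -/
universe u

/-- The formal partial derivative `∂f/∂X_i` of a multivariate power series. -/
noncomputable def psDeriv {k : Type u} [CommRing k] (i : Fin 2)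
    (f : MvPowerSeries (Fin 2) k) : MvPowerSeries (Fin 2) k :=
  fun m => ((m i + 1 : ℕ) : k) * MvPowerSeries.coeff (m + Finsupp.single i 1) f

/-- The Jacobian number (Tjurina number) `dim_k k[[S,T]]/(f_S, f_T, f)` of a plane curve
singularity `f ∈ k[[S,T]]`. -/
noncomputable def tjurina {k : Type u} [Field k] (f : MvPowerSeries (Fin 2) k) : Cardinal :=
  Module.rank k (MvPowerSeries (Fin 2) k ⧸ Ideal.span {psDeriv 0 f, psDeriv 1 f, f})

/-!
In characteristic `2` the quadratic part `aST + bS² + cT²` of `f` contributes only `aT` and `aS`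
to the linear parts of `f_S` and `f_T`. If `f` has a nonzero linear coefficient, then `f_S` or
`f_T` is a unit. Otherwise, if `a = 0`, all of `f_S, f_T, f` have order `≥ 2`, so `1, S, T` stay
linearly independent in the quotient; if `a ≠ 0`, then `f_S ≡ aT` and `f_T ≡ aS` modulo `𝔪²`,
and Nakayama's lemma gives `(f_S, f_T) = 𝔪 = (S, T)`, so the quotient is `k`.
-/

open MvPowerSeries IsLocalRing

theorem IsLocalRing.maximalIdeal_le_span_pair {A : Type*} [CommRing A] [IsLocalRing A]
    {x y g h c : A} (hc : IsUnit c) (hxy : maximalIdeal A = Ideal.span {x, y})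
    (hg : g - c * x ∈ maximalIdeal A ^ 2) (hh : h - c * y ∈ maximalIdeal A ^ 2) :
    maximalIdeal A ≤ Ideal.span {g, h} := by
  have hfg : (maximalIdeal A).FG := hxy ▸ Submodule.fg_span (Set.toFinite _)
  refine Submodule.le_of_le_smul_of_le_jacobson_bot hfg (maximalIdeal_le_jacobson ⊥) ?_
  rw [Ideal.smul_eq_mul, ← sq]
  obtain ⟨u, rfl⟩ := hc
  have mem_of_sub {z w : A} (hw : w ∈ Ideal.span {g, h}) (hwz : w - u * z ∈ maximalIdeal A ^ 2) :
      z ∈ Ideal.span {g, h} ⊔ maximalIdeal A ^ 2 := by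
    rw [show z = ↑u⁻¹ * w - ↑u⁻¹ * (w - u * z) by rw [mul_sub, u.inv_mul_cancel_left, sub_sub_cancel]]
    exact sub_mem (Ideal.mul_mem_left _ _ (Ideal.mem_sup_left hw))
      (Ideal.mul_mem_left _ _ (Ideal.mem_sup_right hwz))
  conv_lhs => rw [hxy]
  rw [Ideal.span_le]
  rintro _ (rfl | rfl)
  · exact mem_of_sub (Ideal.subset_span (by simp)) hg
  · exact mem_of_sub (Ideal.subset_span (by simp)) hh

theorem rank_le_rank_quotient_of_surjective {k : Type*} {A V : Type u} [CommRing k] [CommRing A]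
    [Algebra k A] [AddCommGroup V] [Module k V] (J : Ideal A) (φ : A →ₗ[k] V)
    (hφ : Function.Surjective φ) (hJ : ∀ x ∈ J, φ x = 0) :
    Module.rank k V ≤ Module.rank k (A ⧸ J) := by
  let ψ := (J.restrictScalars k).liftQ φ hJ
  have hψ : Function.Surjective ψ := by
    intro v
    obtain ⟨a, rfl⟩ := hφ v
    exact ⟨Submodule.Quotient.mk a, rfl⟩
  exact (ψ.rank_le_of_surjective hψ).trans_eq (Submodule.Quotient.restrictScalarsEquiv k J).rank_eq

theorem Finsupp.eq_zero_or_eq_single_of_degree_lt_two {d : Fin 2 →₀ ℕ} (hd : d.degree < 2) :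
    d = 0 ∨ d = single 0 1 ∨ d = single 1 1 := by
  rw [degree_eq_sum, Fin.sum_univ_two] at hd
  have hd' : d = single 0 (d 0) + single 1 (d 1) := by ext i; fin_cases i <;> simp
  obtain h | h | h : (d 0 = 0 ∧ d 1 = 0) ∨ (d 0 = 1 ∧ d 1 = 0) ∨ (d 0 = 0 ∧ d 1 = 1) := by omega
  all_goals rw [hd', h.1, h.2]; simp

namespace MvPowerSeries

variable {σ R : Type*}

def idealOfOrderGE [CommSemiring R] (n : ℕ) : Ideal (MvPowerSeries σ R) where
  carrier := {f | n ≤ f.order}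
  add_mem' hf hg := le_trans (le_min hf hg) min_order_le_add
  zero_mem' := by simp
  smul_mem' _ _ hf := hf.trans <| le_add_self.trans le_order_mul

@[simp]
theorem mem_idealOfOrderGE [CommSemiring R] {n : ℕ} {f : MvPowerSeries σ R} :
    f ∈ idealOfOrderGE n ↔ n ≤ f.order :=
  Iff.rfl

theorem surjective_pi_coeff [CommSemiring R] {ι : Type*} [Fintype ι] {e : ι → σ →₀ ℕ}
    (he : Function.Injective e) :
    Function.Surjective (LinearMap.pi fun i => coeff (R := R) (e i)) := by
  classical
  intro w
  refine ⟨∑ j, monomial (e j) (w j), funext fun i => ?_⟩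
  simp [coeff_monomial, he.eq_iff]

theorem coeff_single_X_mul [Semiring R] (s : σ) (φ : MvPowerSeries σ R) :
    coeff (Finsupp.single s 1) (X s * φ) = constantCoeff φ := by
  simpa [X_def] using coeff_add_monomial_mul (Finsupp.single s 1) 0 φ 1

theorem exists_eq_X_zero_mul_add_X_one_mul [CommRing R] {g : MvPowerSeries (Fin 2) R}
    (hg : constantCoeff g = 0) :
    ∃ u v, g = X 0 * u + X 1 * v ∧ constantCoeff u = coeff (Finsupp.single 0 1) g ∧
      constantCoeff v = coeff (Finsupp.single 1 1) g := by
  classical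
  -- `h = g(0, T)`, so that `S ∣ g - h` and `T ∣ h`
  let h : MvPowerSeries (Fin 2) R := fun m => if m 0 = 0 then coeff m g else 0
  have coeff_h (m) : coeff m h = if m 0 = 0 then coeff m g else 0 := rfl
  obtain ⟨u, hu⟩ : X 0 ∣ g - h := X_dvd_iff.mpr fun m hm => by simp [coeff_h, hm]
  obtain ⟨v, hv⟩ : X 1 ∣ h := X_dvd_iff.mpr fun m hm => by
    rw [coeff_h]
    split_ifs with h0
    · rw [show m = 0 by ext i; fin_cases i <;> assumption]
      exact hg
    · rfl
  refine ⟨u, v, by rw [← hv, ← hu]; ring, ?_, ?_⟩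
  · simpa [coeff_h, coeff_single_X_mul] using (congrArg (coeff (Finsupp.single 0 1)) hu).symm
  · simpa [coeff_h, coeff_single_X_mul] using (congrArg (coeff (Finsupp.single 1 1)) hv).symm

section Field

variable {k : Type*} [Field k]

theorem mem_maximalIdeal_iff {f : MvPowerSeries σ k} :
    f ∈ maximalIdeal (MvPowerSeries σ k) ↔ constantCoeff f = 0 := by
  rw [mem_maximalIdeal, mem_nonunits_iff, isUnit_iff_constantCoeff, isUnit_iff_ne_zero, not_not]

theorem X_mem_maximalIdeal (i : σ) : X i ∈ maximalIdeal (MvPowerSeries σ k) :=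
  mem_maximalIdeal_iff.mpr (constantCoeff_X i)

theorem rank_quotient_maximalIdeal :
    Module.rank k (MvPowerSeries σ k ⧸ maximalIdeal (MvPowerSeries σ k)) = 1 := by
  let c : MvPowerSeries σ k →ₐ[k] k := { constantCoeff with commutes' := constantCoeff_C }
  have hker : RingHom.ker c = maximalIdeal (MvPowerSeries σ k) := by
    ext f
    exact mem_maximalIdeal_iff.symm
  rw [← hker]
  simpa using (Ideal.quotientKerAlgEquivOfSurjective (f := c)
    fun r => ⟨C r, constantCoeff_C r⟩).toLinearEquiv.lift_rank_eq

theorem maximalIdeal_eq_span_X :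
    maximalIdeal (MvPowerSeries (Fin 2) k) = Ideal.span {X 0, X 1} := by
  refine le_antisymm (fun g hg => ?_) (Ideal.span_le.mpr ?_)
  · obtain ⟨u, v, rfl, -⟩ := exists_eq_X_zero_mul_add_X_one_mul (mem_maximalIdeal_iff.mp hg)
    exact Ideal.mem_span_pair.mpr ⟨u, v, by ring⟩
  · rintro _ (rfl | rfl) <;> exact X_mem_maximalIdeal _

theorem mem_maximalIdeal_sq_of_two_le_order {g : MvPowerSeries (Fin 2) k} (hg : 2 ≤ g.order) :
    g ∈ maximalIdeal (MvPowerSeries (Fin 2) k) ^ 2 := by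
  have hlow {d : Fin 2 →₀ ℕ} (hd : d.degree < 2) : coeff d g = 0 :=
    coeff_of_lt_order (lt_of_lt_of_le (by exact_mod_cast hd) hg)
  obtain ⟨u, v, rfl, hu, hv⟩ := exists_eq_X_zero_mul_add_X_one_mul (hlow (d := 0) (by simp))
  rw [hlow (by simp)] at hu hv
  rw [sq]
  exact add_mem (Ideal.mul_mem_mul (X_mem_maximalIdeal _) (mem_maximalIdeal_iff.mpr hu))
    (Ideal.mul_mem_mul (X_mem_maximalIdeal _) (mem_maximalIdeal_iff.mpr hv))

theorem three_le_rank_quotient {J : Ideal (MvPowerSeries (Fin 2) k)}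
    (hJ : J ≤ idealOfOrderGE 2) : 3 ≤ Module.rank k (MvPowerSeries (Fin 2) k ⧸ J) := by
  let e : Fin 3 → Fin 2 →₀ ℕ := ![0, Finsupp.single 0 1, Finsupp.single 1 1]
  have he : Function.Injective e := by
    intro i j
    fin_cases i <;> fin_cases j <;> simp [e, Finsupp.ext_iff, Fin.forall_fin_two]
  have hdeg (i : Fin 3) : ((e i).degree : ℕ∞) < 2 := by
    fin_cases i <;> simp [e]
  have := rank_le_rank_quotient_of_surjective J _ (surjective_pi_coeff (R := k) he)
    fun x hx => funext fun i => coeff_of_lt_order ((hdeg i).trans_le (hJ hx))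
  simpa using this

end Field

end MvPowerSeries

section Tjurina

variable {k : Type u}

theorem coeff_psDeriv [CommRing k] (i : Fin 2) (f : MvPowerSeries (Fin 2) k)
    (m : Fin 2 →₀ ℕ) :
    coeff m (psDeriv i f) = ((m i + 1 : ℕ) : k) * coeff (m + Finsupp.single i 1) f := rfl

theorem constantCoeff_psDeriv [CommRing k] (i : Fin 2) (f : MvPowerSeries (Fin 2) k) :
    constantCoeff (psDeriv i f) = coeff (Finsupp.single i 1) f := by
  simp [← coeff_zero_eq_constantCoeff_apply, coeff_psDeriv]

theorem two_le_order_psDeriv_sub [CommRing k] [CharP k 2] {f : MvPowerSeries (Fin 2) k}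
    (hlin : ∀ i, coeff (Finsupp.single i 1) f = 0) {i j : Fin 2} (hij : i ≠ j) :
    2 ≤ (psDeriv i f - C (coeff (Finsupp.single 0 1 + Finsupp.single 1 1) f) * X j).order := by
  refine nat_le_order fun d hd => ?_
  rcases Finsupp.eq_zero_or_eq_single_of_degree_lt_two hd with rfl | rfl | rfl <;>
    fin_cases i <;> fin_cases j <;>
    simp [coeff_psDeriv, constantCoeff_psDeriv, coeff_X, hlin, add_comm, CharTwo.two_eq_zero,
      Finsupp.single_eq_single_iff] at hij ⊢

variable [Field k] {f : MvPowerSeries (Fin 2) k}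

theorem tjurina_eq_zero_of_coeff_single_ne_zero {i : Fin 2}
    (hi : coeff (Finsupp.single i 1) f ≠ 0) : tjurina f = 0 := by
  have hunit : IsUnit (psDeriv i f) := by
    rw [isUnit_iff_constantCoeff, constantCoeff_psDeriv]
    exact hi.isUnit
  have hmem : psDeriv i f ∈ Ideal.span {psDeriv 0 f, psDeriv 1 f, f} :=
    Ideal.subset_span (by fin_cases i <;> simp)
  have := Ideal.Quotient.subsingleton_iff.mpr (Ideal.eq_top_of_isUnit_mem _ hmem hunit)
  exact rank_subsingleton' _ _

variable [CharP k 2] (hconst : constantCoeff f = 0)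
  (hlin : ∀ i : Fin 2, coeff (Finsupp.single i 1) f = 0)
include hconst hlin

theorem three_le_tjurina (ha : coeff (Finsupp.single 0 1 + Finsupp.single 1 1) f = 0) :
    3 ≤ tjurina f := by
  refine three_le_rank_quotient (Ideal.span_le.mpr ?_)
  rintro _ (rfl | rfl | rfl) <;> rw [SetLike.mem_coe, mem_idealOfOrderGE]
  · simpa [ha] using two_le_order_psDeriv_sub hlin zero_ne_one
  · simpa [ha] using two_le_order_psDeriv_sub hlin one_ne_zero
  · refine nat_le_order fun d hd => ?_
    rcases Finsupp.eq_zero_or_eq_single_of_degree_lt_two hd with rfl | rfl | rfl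
    exacts [hconst, hlin 0, hlin 1]

theorem tjurina_eq_one (ha : coeff (Finsupp.single 0 1 + Finsupp.single 1 1) f ≠ 0) :
    tjurina f = 1 := by
  have hJ : Ideal.span {psDeriv 0 f, psDeriv 1 f, f} = maximalIdeal (MvPowerSeries (Fin 2) k) := by
    refine le_antisymm (Ideal.span_le.mpr ?_) ?_
    · rintro _ (rfl | rfl | rfl) <;>
        simp only [SetLike.mem_coe, mem_maximalIdeal_iff, constantCoeff_psDeriv, hlin, hconst]
    · refine (maximalIdeal_le_span_pair (ha.isUnit.map C) maximalIdeal_eq_span_X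
        (mem_maximalIdeal_sq_of_two_le_order (two_le_order_psDeriv_sub hlin one_ne_zero))
        (mem_maximalIdeal_sq_of_two_le_order (two_le_order_psDeriv_sub hlin zero_ne_one))).trans ?_
      exact Ideal.span_mono (by simp [Set.insert_subset_iff])
  rw [tjurina, hJ, rank_quotient_maximalIdeal]

end Tjurina

theorem stmt_9_general (k : Type u) [Field k] [CharP k 2]
    (f : MvPowerSeries (Fin 2) k)
    (hfconst : MvPowerSeries.constantCoeff f = 0) :
    tjurina f ≠ 2 ∧
    ((∃ i : Fin 2, MvPowerSeries.coeff (Finsupp.single i 1) f ≠ 0) → tjurina f = 0) ∧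
    ((∀ i : Fin 2, MvPowerSeries.coeff (Finsupp.single i 1) f = 0) →
      MvPowerSeries.coeff (Finsupp.single 0 1 + Finsupp.single 1 1) f = 0 →
        3 ≤ tjurina f) ∧
    ((∀ i : Fin 2, MvPowerSeries.coeff (Finsupp.single i 1) f = 0) →
      MvPowerSeries.coeff (Finsupp.single 0 1 + Finsupp.single 1 1) f ≠ 0 →
        tjurina f = 1) := by
  refine ⟨?_, fun ⟨i, hi⟩ => tjurina_eq_zero_of_coeff_single_ne_zero hi,
    three_le_tjurina hfconst, tjurina_eq_one hfconst⟩
  by_cases hlin : ∀ i : Fin 2, coeff (Finsupp.single i 1) f = 0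
  · by_cases ha : coeff (Finsupp.single 0 1 + Finsupp.single 1 1) f = 0
    · intro h
      have := h ▸ three_le_tjurina hfconst hlin ha
      norm_num at this
    · simp [tjurina_eq_one hfconst hlin ha]
  · obtain ⟨i, hi⟩ := not_forall.mp hlin
    simp [tjurina_eq_zero_of_coeff_single_ne_zero hi]

/-- Let `k` be an (algebraically closed) field of characteristic `2`, and let
`f ∈ k[[S,T]]` be a nonzero power series with `f(0,0) = 0` defining a curve singularity.
Then the Jacobian number `dim_k k[[S,T]]/(f_S, f_T, f)` is never equal to `2`: it is `0` if
the linear part of `f` is nonzero; at least `3` if the linear part vanishes and the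
coefficient of `ST` in `f` is `0`; and equal to `1` (`f` defines a node) if the linear part
vanishes and the coefficient of `ST` is nonzero. -/
theorem stmt_9 (k : Type u) [Field k] [IsAlgClosed k] [CharP k 2]
    (f : MvPowerSeries (Fin 2) k) (hf0 : f ≠ 0)
    (hfconst : MvPowerSeries.constantCoeff f = 0) :
    tjurina f ≠ 2 ∧
    ((∃ i : Fin 2, MvPowerSeries.coeff (Finsupp.single i 1) f ≠ 0) → tjurina f = 0) ∧
    ((∀ i : Fin 2, MvPowerSeries.coeff (Finsupp.single i 1) f = 0) →
      MvPowerSeries.coeff (Finsupp.single 0 1 + Finsupp.single 1 1) f = 0 →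
        3 ≤ tjurina f) ∧
    ((∀ i : Fin 2, MvPowerSeries.coeff (Finsupp.single i 1) f = 0) →
      MvPowerSeries.coeff (Finsupp.single 0 1 + Finsupp.single 1 1) f ≠ 0 →
        tjurina f = 1) :=
  stmt_9_general k f hfconst
end
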